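/- arXiv:2207.13335 — 2 statements merged into one kernel-verified Lean document; each statement's English description precedes it below -/
import Mathlib

section
/- Let m be a positive even integer and k a positive odd integer with gcd(2^k - 1, 2^m - 1) = 1 and gcd(2^k + 1, 2^m + 1) = 1. Then the polynomial f(x) = Σ_j x^{2^{k+m} - j·2^m + j - 1}, where j ranges over 1 ≤ j ≤ 2^k with j ≡ 0 or 2 mod 3, is a permutation polynomial of F_{2^{2m}}. -/
/-!
Write `q = 2 ^ m`, `Q = 2 ^ k` and let `ω` be a root of `X² + X + 1` in `𝔽_{q²}`; it lies in
`𝔽_q` because `m` is even, and `ω ^ Q = ω²` because `k` is odd. Substituting `j ↦ Q - j` gives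
`f x = x ^ (Q - 1) * H (x ^ (q - 1))`, where `(z² + z + 1) * H z = z ^ Q + z + 1` in characteristic
`2`. Factoring `x² (z² + z + 1) = (x + ω x^q) (x + ω² x^q)` and applying the Frobenius `y ↦ y^Q`
turns this into `f x = w ^ q + ω² w` with `w = (x + ω x^q) ^ (Q - 1)`. So `f` is the composite of
`x ↦ x + ω x^q`, `u ↦ u ^ (Q - 1)` and `w ↦ w ^ q + ω² w`. The two `𝔽₂`-linear maps have trivial
kernel, since `y ^ q = a y` with `a ^ q = a` forces `y = y ^ (q²) = a² y` and `a² ≠ 1`; the power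
map is bijective since `gcd (2^k - 1, 2^(2m) - 1) = 2^gcd(k, 2m) - 1 = 2^gcd(k, m) - 1 = 1`.
-/

open Finset Function

theorem pow_three_eq_one_of_sq_add_self_add_one_eq_zero {R : Type*} [CommRing R] {ω : R}
    (hω : ω ^ 2 + ω + 1 = 0) : ω ^ 3 = 1 := by
  linear_combination (ω - 1) * hω

theorem FiniteField.pow_injective_of_coprime {K : Type*} [Field K] [Finite K] {n : ℕ}
    (hn0 : n ≠ 0) (hn : n.Coprime (Nat.card K - 1)) : Injective fun x : K => x ^ n := by
  intro a b hab
  simp only at hab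
  rcases eq_or_ne a 0 with rfl | ha
  · rw [zero_pow hn0, eq_comm, pow_eq_zero_iff hn0] at hab
    exact hab.symm
  rcases eq_or_ne b 0 with rfl | hb
  · rwa [zero_pow hn0, pow_eq_zero_iff hn0] at hab
  have hunits : (Nat.card Kˣ).Coprime n := by rw [Nat.card_units]; exact hn.symm
  have := hunits.pow_left_bijective.injective (a₁ := Units.mk0 a ha) (a₂ := Units.mk0 b hb)
    (Units.ext (by simpa using hab))
  simpa using congrArg Units.val this

theorem exists_sq_add_self_add_one_eq_zero {K : Type*} [Field K] [Finite K]
    (h3 : 3 ∣ Nat.card K - 1) : ∃ ω : K, ω ^ 2 + ω + 1 = 0 := by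
  have : Fact (Nat.Prime 3) := ⟨Nat.prime_three⟩
  obtain ⟨ω, hω⟩ := exists_prime_orderOf_dvd_card' (G := Kˣ) 3 (by rwa [Nat.card_units])
  refine ⟨ω, ?_⟩
  have hω1 : (ω : K) ≠ 1 := by
    intro h
    rw [Units.val_eq_one.mp h, orderOf_one] at hω
    omega
  have hω3 : (ω : K) ^ 3 = 1 := by
    rw [← Units.val_pow_eq_pow_val, ← hω, pow_orderOf_eq_one, Units.val_one]
  have hfac : ((ω : K) - 1) * ((ω : K) ^ 2 + ω + 1) = 0 := by linear_combination hω3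
  exact (mul_eq_zero.mp hfac).resolve_left (sub_ne_zero.mpr hω1)

theorem CharTwo.mul_sum_filter_pow_eq {R : Type*} [CommRing R] [CharP R 2] (z : R) {Q : ℕ}
    (hQ : Q % 3 = 2) :
    (z ^ 2 + z + 1) * ∑ i ∈ (range Q).filter (fun i => i % 3 ≠ 1), z ^ i = z ^ Q + z + 1 := by
  obtain ⟨t, rfl⟩ : ∃ t, Q = 3 * t + 2 := ⟨Q / 3, by omega⟩
  induction t with
  | zero => norm_num [Finset.sum_filter, Finset.sum_range_succ]
  | succ t ih =>
    have hs : (range (3 * (t + 1) + 2)).filter (fun i => i % 3 ≠ 1)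
        = insert (3 * t + 3)
            (insert (3 * t + 2) ((range (3 * t + 2)).filter (fun i => i % 3 ≠ 1))) := by
      ext i
      simp only [mem_insert, mem_filter, mem_range]
      omega
    rw [hs, sum_insert (by simp), sum_insert (by simp), mul_add, mul_add, ih (by omega)]
    linear_combination (z ^ (3 * t + 2) * (1 + z + z ^ 2)) * CharTwo.two_eq_zero (R := R)

theorem sum_filter_Icc_pow_eq {R : Type*} [CommSemiring R] (x : R) {Q q : ℕ} (hq : 1 ≤ q)
    (hQ : Q % 3 = 2) :
    ∑ j ∈ (Icc 1 Q).filter (fun j => j % 3 = 0 ∨ j % 3 = 2), x ^ (Q * q - j * q + j - 1)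
      = (∑ i ∈ (range Q).filter (fun i => i % 3 ≠ 1), (x ^ (q - 1)) ^ i) * x ^ (Q - 1) := by
  rw [sum_mul]
  refine sum_nbij' (fun j => Q - j) (fun i => Q - i) ?_ ?_ ?_ ?_ ?_ <;>
    simp only [mem_filter, mem_Icc, mem_range]
  · intro j hj; omega
  · intro i hi; omega
  · intro j hj; omega
  · intro i hi; omega
  · rintro j ⟨⟨hj1, hjQ⟩, -⟩
    have hjq : j * q ≤ Q * q := Nat.mul_le_mul_right _ hjQ
    have hexp : Q * q - j * q + j - 1 = (q - 1) * (Q - j) + (Q - 1) := by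
      zify [hq, hjQ, hjq, hj1, hj1.trans hjQ, hj1.trans (Nat.le_add_left j (Q * q - j * q))]
      ring
    rw [hexp, pow_add, pow_mul]

theorem Nat.two_pow_mod_three_of_even {n : ℕ} (hn : Even n) : 2 ^ n % 3 = 1 := by
  obtain ⟨b, rfl⟩ := hn
  rw [← two_mul, pow_mul, Nat.pow_mod]
  norm_num

theorem Nat.two_pow_mod_three_of_odd {n : ℕ} (hn : Odd n) : 2 ^ n % 3 = 2 := by
  obtain ⟨b, rfl⟩ := hn
  rw [pow_succ, pow_mul, Nat.mul_mod, Nat.pow_mod]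
  norm_num

section CharacteristicTwo

variable {K : Type*} [Field K] [CharP K 2]

theorem sum_mul_pow_eq_of_mul_eq {ω : K} (hω : ω ^ 2 + ω + 1 = 0) {k : ℕ} (hk : 2 ^ k % 3 = 2)
    {x z B : K} (hxz : x * z = B) (hu : x + ω * B ≠ 0) (hv : x + ω ^ 2 * B ≠ 0) :
    (∑ i ∈ (range (2 ^ k)).filter (fun i => i % 3 ≠ 1), z ^ i) * x ^ (2 ^ k - 1)
      = ω ^ 2 * (x + ω * B) ^ (2 ^ k - 1) + ω * (x + ω ^ 2 * B) ^ (2 ^ k - 1) := by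
  have hω3 := pow_three_eq_one_of_sq_add_self_add_one_eq_zero hω
  have htwo : (2 : K) = 0 := CharTwo.two_eq_zero
  have hQ0 : 2 ^ k ≠ 0 := by positivity
  have huv : (x + ω * B) * (x + ω ^ 2 * B) = x ^ 2 * (z ^ 2 + z + 1) := by
    linear_combination x * B * hω + B ^ 2 * hω3 - (B + x * z + x) * hxz - x * B * htwo
  have huQ : (x + ω * B) ^ 2 ^ k = x ^ 2 ^ k + ω ^ 2 * B ^ 2 ^ k := by
    rw [add_pow_char_pow, mul_pow, pow_eq_pow_mod _ hω3, hk]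
  have hvQ : (x + ω ^ 2 * B) ^ 2 ^ k = x ^ 2 ^ k + ω * B ^ 2 ^ k := by
    rw [add_pow_char_pow, mul_pow, ← pow_mul, pow_eq_pow_mod _ hω3, Nat.mul_mod, hk, pow_one]
  apply mul_right_cancel₀ (mul_ne_zero hu hv)
  calc (∑ i ∈ (range (2 ^ k)).filter (fun i => i % 3 ≠ 1), z ^ i) * x ^ (2 ^ k - 1)
          * ((x + ω * B) * (x + ω ^ 2 * B))
      = ((z ^ 2 + z + 1) * ∑ i ∈ (range (2 ^ k)).filter (fun i => i % 3 ≠ 1), z ^ i)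
          * (x ^ (2 ^ k - 1) * x) * x := by rw [huv]; ring
    _ = x * B ^ 2 ^ k + x ^ 2 ^ k * B + x ^ 2 ^ k * x := by
      rw [CharTwo.mul_sum_filter_pow_eq z hk, pow_sub_one_mul hQ0, ← hxz]
      ring
    _ = ω ^ 2 * ((x + ω * B) ^ (2 ^ k - 1) * (x + ω * B)) * (x + ω ^ 2 * B)
          + ω * ((x + ω ^ 2 * B) ^ (2 ^ k - 1) * (x + ω ^ 2 * B)) * (x + ω * B) := by
      rw [pow_sub_one_mul hQ0, pow_sub_one_mul hQ0, huQ, hvQ]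
      linear_combination (x ^ 2 ^ k * x + x ^ 2 ^ k * B + x * B ^ 2 ^ k) * hω
        - (ω * x * B ^ 2 ^ k + ω * x ^ 2 ^ k * B + (ω ^ 3 + 2) * B * B ^ 2 ^ k) * hω3
        - ((ω + ω ^ 2) * (x ^ 2 ^ k * x + x * B ^ 2 ^ k + x ^ 2 ^ k * B) + B * B ^ 2 ^ k) * htwo
    _ = _ := by ring

theorem frob_add_mul_injective {m : ℕ} (hK : ∀ x : K, (x ^ 2 ^ m) ^ 2 ^ m = x) {a : K}
    (ha : a ^ 2 ^ m = a) (ha2 : a ^ 2 ≠ 1) : Injective fun x : K => x ^ 2 ^ m + a * x := by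
  intro x y hxy
  have hd : (x - y) ^ 2 ^ m = a * (x - y) := by
    rw [sub_pow_char_pow, CharTwo.sub_eq_add, CharTwo.sub_eq_add]
    linear_combination hxy + (y ^ 2 ^ m - a * x) * CharTwo.two_eq_zero (R := K)
  have hd2 : x - y = a ^ 2 * (x - y) := by
    conv_lhs => rw [← hK (x - y), hd, mul_pow, hd, ha]
    ring
  have : (a ^ 2 - 1) * (x - y) = 0 := by linear_combination -hd2
  exact sub_eq_zero.mp ((mul_eq_zero.mp this).resolve_left (sub_ne_zero.mpr ha2))

theorem frob_add_sq_mul_injective {m : ℕ} (hK : ∀ x : K, (x ^ 2 ^ m) ^ 2 ^ m = x) {ω : K}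
    (hω : ω ^ 2 + ω + 1 = 0) (hωq : ω ^ 2 ^ m = ω) :
    Injective fun x : K => x ^ 2 ^ m + ω ^ 2 * x := by
  have hω3 := pow_three_eq_one_of_sq_add_self_add_one_eq_zero hω
  have hω1 : ω ≠ 1 := by
    rintro rfl
    exact one_ne_zero (by linear_combination hω - CharTwo.two_eq_zero (R := K))
  refine frob_add_mul_injective hK (by rw [← pow_mul, mul_comm, pow_mul, hωq]) ?_
  rwa [← pow_mul, pow_eq_pow_mod _ hω3, pow_one]

theorem add_mul_frob_injective {m : ℕ} (hK : ∀ x : K, (x ^ 2 ^ m) ^ 2 ^ m = x) {ω : K}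
    (hω : ω ^ 2 + ω + 1 = 0) (hωq : ω ^ 2 ^ m = ω) :
    Injective fun x : K => x + ω * x ^ 2 ^ m := by
  have hω3 := pow_three_eq_one_of_sq_add_self_add_one_eq_zero hω
  have hω0 : ω ≠ 0 := by rintro rfl; norm_num at hω3
  convert (mul_right_injective₀ hω0).comp (frob_add_sq_mul_injective hK hω hωq) using 1
  ext x
  simp only [comp_apply]
  linear_combination -x * hω3

theorem sum_mul_pow_eq_frob_twist {m : ℕ} (hK : ∀ x : K, (x ^ 2 ^ m) ^ 2 ^ m = x) {ω : K}
    (hω : ω ^ 2 + ω + 1 = 0) (hωq : ω ^ 2 ^ m = ω) {k : ℕ} (hk : 2 ^ k % 3 = 2) (x : K) :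
    (∑ i ∈ (range (2 ^ k)).filter (fun i => i % 3 ≠ 1), (x ^ (2 ^ m - 1)) ^ i) * x ^ (2 ^ k - 1)
      = ((x + ω * x ^ 2 ^ m) ^ (2 ^ k - 1)) ^ 2 ^ m
          + ω ^ 2 * (x + ω * x ^ 2 ^ m) ^ (2 ^ k - 1) := by
  have hQ1 : (2 ^ k - 1) % 3 = 1 := by generalize 2 ^ k = Q at hk; omega
  rcases eq_or_ne x 0 with rfl | hx
  · simp [zero_pow (show 2 ^ k - 1 ≠ 0 by omega)]
  have hω3 := pow_three_eq_one_of_sq_add_self_add_one_eq_zero hω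
  have hu : x + ω * x ^ 2 ^ m ≠ 0 := fun h =>
    hx (add_mul_frob_injective hK hω hωq (h.trans (by simp)))
  have hfrob : (x + ω * x ^ 2 ^ m) ^ 2 ^ m = ω * (x + ω ^ 2 * x ^ 2 ^ m) := by
    rw [add_pow_char_pow, mul_pow, hωq, hK]
    linear_combination -(x ^ 2 ^ m) * hω3
  have hv : x + ω ^ 2 * x ^ 2 ^ m ≠ 0 :=
    right_ne_zero_of_mul (hfrob ▸ pow_ne_zero _ hu)
  rw [sum_mul_pow_eq_of_mul_eq hω hk (mul_pow_sub_one (by positivity) x) hu hv, ← pow_mul,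
    mul_comm (2 ^ k - 1), pow_mul, hfrob, mul_pow, pow_eq_pow_mod (2 ^ k - 1) hω3, hQ1, pow_one]
  ring

end CharacteristicTwo

theorem stmt_17_general (m k : ℕ) (hm : 0 < m) (hme : Even m) (hko : Odd k)
    (h1 : Nat.gcd (2 ^ k - 1) (2 ^ m - 1) = 1) :
    Function.Bijective (fun x : GaloisField 2 (2 * m) =>
      ∑ j ∈ (Finset.Icc 1 (2 ^ k)).filter (fun j => j % 3 = 0 ∨ j % 3 = 2),
        x ^ (2 ^ (k + m) - j * 2 ^ m + j - 1)) := by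
  set K := GaloisField 2 (2 * m)
  have hcard : Nat.card K = 2 ^ (2 * m) := GaloisField.card 2 (2 * m) (by omega)
  have hK : ∀ x : K, (x ^ 2 ^ m) ^ 2 ^ m = x := fun x => by
    have := Fintype.ofFinite K
    rw [← pow_mul, ← pow_add, ← two_mul, ← hcard, Nat.card_eq_fintype_card, FiniteField.pow_card]
  have hk3 := Nat.two_pow_mod_three_of_odd hko
  obtain ⟨ω, hω⟩ := exists_sq_add_self_add_one_eq_zero (K := K) (by
    have := Nat.two_pow_mod_three_of_even (even_two_mul m)
    rw [hcard]; omega)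
  have hωq : ω ^ 2 ^ m = ω := by
    rw [pow_eq_pow_mod _ (pow_three_eq_one_of_sq_add_self_add_one_eq_zero hω),
      Nat.two_pow_mod_three_of_even hme, pow_one]
  have hcop : (2 ^ k - 1).Coprime (Nat.card K - 1) := by
    rw [hcard, Nat.Coprime, Nat.pow_sub_one_gcd_pow_sub_one,
      Nat.Coprime.gcd_mul_left_cancel_right m (Nat.coprime_two_left.mpr hko),
      ← Nat.pow_sub_one_gcd_pow_sub_one, h1]
  refine Finite.injective_iff_bijective.mp ?_
  have hpow := FiniteField.pow_injective_of_coprime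
    (Nat.sub_ne_zero_of_lt (Nat.one_lt_two_pow hko.pos.ne')) hcop
  convert (frob_add_sq_mul_injective hK hω hωq).comp
    (hpow.comp (add_mul_frob_injective hK hω hωq)) using 1
  funext x
  rw [pow_add, sum_filter_Icc_pow_eq x Nat.one_le_two_pow hk3,
    sum_mul_pow_eq_frob_twist hK hω hωq hk3]
  rfl

theorem stmt_17 (m k : ℕ) (hm : 0 < m) (hme : Even m) (hk : 0 < k) (hko : Odd k)
    (h1 : Nat.gcd (2 ^ k - 1) (2 ^ m - 1) = 1)
    (h2 : Nat.gcd (2 ^ k + 1) (2 ^ m + 1) = 1) :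
    Function.Bijective (fun x : GaloisField 2 (2 * m) =>
      ∑ j ∈ (Finset.Icc 1 (2 ^ k)).filter (fun j => j % 3 = 0 ∨ j % 3 = 2),
        x ^ (2 ^ (k + m) - j * 2 ^ m + j - 1)) :=
  stmt_17_general m k hm hme hko h1
end

section
/- Let m be a positive integer and let s be an integer with 1 ≤ s ≤ 2^m. Then the binary Hamming weight of s·(2^m - 1) equals m, and consequently the Hamming weight of s·(2^m - 1) + 1 is at most m + 1. -/
/-!
Since `s * (2^m - 1) = (s - 1) * 2^m + (2^m - s)` with `2^m - s < 2^m`, the binary expansion of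
`s * (2^m - 1)` is that of `s - 1` followed by the `m`-digit expansion of `2^m - 1 - (s - 1)`, the
bitwise complement of `s - 1` in `m` bits. A number and its `m`-bit complement have weights summing
to `m`, and adding `1` raises the weight by at most one, since its carries only clear trailing ones.
-/

namespace Nat

variable {b : ℕ}

theorem digits_sum_add_mul_base_pow (hb : 1 < b) {k c : ℕ} (hc : c < b ^ k) (a : ℕ) :
    (b.digits (c + b ^ k * a)).sum = (b.digits c).sum + (b.digits a).sum := by
  rcases eq_or_ne a 0 with rfl | ha
  · simp
  have hlen : (b.digits c).length ≤ k := (digits_length_le_iff hb c).2 hc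
  have := digits_append_zeroes_append_digits (k := k - (b.digits c).length) (n := c) hb
    (pos_of_ne_zero ha)
  rw [Nat.add_sub_cancel' hlen] at this
  simp [← this]

theorem digits_sum_of_lt {r : ℕ} (hr : r < b) : (b.digits r).sum = r := by
  rcases eq_or_ne r 0 with rfl | hr0
  · simp
  · simp [digits_of_lt b r hr0 hr]

theorem digits_sum_add_base_mul (hb : 1 < b) {r : ℕ} (hr : r < b) (q : ℕ) :
    (b.digits (r + b * q)).sum = r + (b.digits q).sum := by
  have := digits_sum_add_mul_base_pow hb (k := 1) (by rwa [pow_one]) q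
  rwa [pow_one, digits_sum_of_lt hr] at this

theorem digits_sum_base_pow_sub_one_sub_add (hb : 1 < b) {k a : ℕ} (ha : a < b ^ k) :
    (b.digits (b ^ k - 1 - a)).sum + (b.digits a).sum = k * (b - 1) := by
  induction k generalizing a with
  | zero => simp_all
  | succ k ih =>
    obtain ⟨r, q, hr, rfl⟩ : ∃ r q, r < b ∧ a = r + b * q :=
      ⟨a % b, a / b, mod_lt a (by omega), (mod_add_div a b).symm⟩
    have hq : q + 1 ≤ b ^ k := by
      by_contra! h
      have : b * b ^ k ≤ b * q := Nat.mul_le_mul_left b (by omega)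
      rw [pow_succ'] at ha
      omega
    -- Subtracting from `b^(k+1) - 1` complements every digit without borrows.
    have hcompl : b ^ (k + 1) - 1 - (r + b * q) = (b - 1 - r) + b * (b ^ k - 1 - q) := by
      have : b * (q + 1) ≤ b * b ^ k := Nat.mul_le_mul_left b hq
      rw [pow_succ', Nat.mul_sub, Nat.mul_sub, mul_one]
      rw [mul_add, mul_one] at this
      omega
    rw [hcompl, digits_sum_add_base_mul hb (by omega), digits_sum_add_base_mul hb hr,
      add_mul, one_mul, ← ih (a := q) (by omega)]
    omega

theorem digits_sum_succ_le (hb : 1 < b) (n : ℕ) :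
    (b.digits (n + 1)).sum ≤ (b.digits n).sum + 1 := by
  induction n using Nat.strong_induction_on with
  | _ n ih =>
    obtain ⟨r, q, hr, rfl⟩ : ∃ r q, r < b ∧ n = r + b * q :=
      ⟨n % b, n / b, mod_lt n (by omega), (mod_add_div n b).symm⟩
    rw [digits_sum_add_base_mul hb hr]
    rcases lt_or_eq_of_le (succ_le_of_lt hr) with hr' | hr'
    · rw [add_right_comm, digits_sum_add_base_mul hb hr']
      omega
    · have hcarry : r + b * q + 1 = 0 + b * (q + 1) := by rw [mul_add_one]; omega
      have hq : q < r + b * q := by nlinarith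
      rw [hcarry, digits_sum_add_base_mul hb (by omega)]
      have := ih q hq
      omega

end Nat

theorem stmt_18_general (m s : ℕ) (hs1 : 1 ≤ s) (hs2 : s ≤ 2 ^ m) :
    (Nat.digits 2 (s * (2 ^ m - 1))).sum = m ∧
      (Nat.digits 2 (s * (2 ^ m - 1) + 1)).sum ≤ m + 1 := by
  have hsplit : s * (2 ^ m - 1) = (2 ^ m - 1 - (s - 1)) + 2 ^ m * (s - 1) := by
    zify [hs1, hs2, Nat.one_le_two_pow, (by omega : s - 1 ≤ 2 ^ m - 1)]
    ring
  have hweight : (Nat.digits 2 (s * (2 ^ m - 1))).sum = m := by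
    rw [hsplit, Nat.digits_sum_add_mul_base_pow one_lt_two (by omega),
      Nat.digits_sum_base_pow_sub_one_sub_add one_lt_two (by omega)]
    omega
  exact ⟨hweight, (Nat.digits_sum_succ_le one_lt_two _).trans (by rw [hweight])⟩

theorem stmt_18 (m s : ℕ) (hm : 0 < m) (hs1 : 1 ≤ s) (hs2 : s ≤ 2 ^ m) :
    (Nat.digits 2 (s * (2 ^ m - 1))).sum = m ∧
      (Nat.digits 2 (s * (2 ^ m - 1) + 1)).sum ≤ m + 1 :=
  stmt_18_general m s hs1 hs2
end
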